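/- Let (M, g) be a relativistic spacetime, γ an embedded curve, and let ḡ be a flat metric on a neighborhood O that agrees with g, together with its Levi-Civita derivative operator, on γ[I] ∩ O (as provided by the Local Flatness Theorem). If ξ is a Killing vector field of ḡ on O (i.e., the Lie derivative of ḡ along ξ vanishes on O), then the Lie derivative of g along ξ vanishes at every point of γ[I] ∩ O; that is, ξ is an approximate local Killing vector field of g at those points. -/
import Mathlib


/-!
Common framework: we work in a fixed global coordinate chart, i.e. on (open subsets of) ℝ⁴,
representing metrics by their component matrices, derivative operators (affine connections)
by their Christoffel symbols, and curvature, covariant derivatives, pullbacks, etc. by the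
usual coordinate formulas.
-/

noncomputable section

open scoped BigOperators
open Matrix

/-- Points of the coordinate space ℝ⁴. -/
abbrev Pt : Type := Fin 4 → ℝ

/-- 4 × 4 real matrices, used for components of rank-2 covariant tensors. -/
abbrev Mat : Type := Matrix (Fin 4) (Fin 4) ℝ

/-- The components of the Minkowski metric, `diag (1, -1, -1, -1)`. -/
def eta : Mat := Matrix.diagonal ![1, -1, -1, -1]

/-- A (symmetric) matrix has Lorentz signature iff it is congruent to the Minkowski form. -/
def LorentzSig (A : Mat) : Prop := ∃ P : Mat, IsUnit P.det ∧ Pᵀ * A * P = eta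

/-- Partial derivative of a scalar field in the `b`-th coordinate direction. -/
def pd (f : Pt → ℝ) (b : Fin 4) (x : Pt) : ℝ := fderiv ℝ f x (Pi.single b 1)

/-- A derivative operator (affine connection), given by its Christoffel symbols
`Γ x a b c = Γᵃ_{bc}(x)` in the global chart. -/
abbrev Conn : Type := Pt → Fin 4 → Fin 4 → Fin 4 → ℝ

/-- A derivative operator is torsion-free on `O` iff its Christoffel symbols are
symmetric in the lower indices there. -/
def TorsionFreeOn (Γ : Conn) (O : Set Pt) : Prop :=
  ∀ x ∈ O, ∀ a b c, Γ x a b c = Γ x a c b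

/-- Smoothness of a connection on a set, componentwise. -/
def SmoothConnOn (Γ : Conn) (O : Set Pt) : Prop :=
  ∀ a b c, ContDiffOn ℝ (⊤ : ℕ∞) (fun x => Γ x a b c) O

/-- The Riemann curvature tensor `Rᵃ_{bcd}` of a derivative operator. -/
def riemann (Γ : Conn) (x : Pt) (a b c d : Fin 4) : ℝ :=
  pd (fun y => Γ y a d b) c x - pd (fun y => Γ y a c b) d x
    + ∑ e, Γ x a c e * Γ x e d b - ∑ e, Γ x a d e * Γ x e c b

/-- A derivative operator is flat on `O` iff its Riemann curvature tensor vanishes there. -/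
def FlatConnOn (Γ : Conn) (O : Set Pt) : Prop :=
  ∀ x ∈ O, ∀ a b c d, riemann Γ x a b c d = 0

/-- Christoffel symbols of the Levi-Civita derivative operator of a metric, i.e. of the
unique torsion-free derivative operator compatible with it. -/
def christoffel (g : Pt → Mat) : Conn := fun x a b c =>
  (1 / 2) * ∑ d, (g x)⁻¹ a d *
    (pd (fun y => g y d c) b x + pd (fun y => g y d b) c x - pd (fun y => g y b c) d x)

/-- A metric is flat on `O` iff the Riemann tensor of its Levi-Civita operator vanishes. -/
def FlatMetricOn (g : Pt → Mat) (O : Set Pt) : Prop :=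
  FlatConnOn (christoffel g) O

/-- Componentwise smoothness of a matrix-valued field on a set. -/
def SmoothMatOn (g : Pt → Mat) (O : Set Pt) : Prop :=
  ∀ a b, ContDiffOn ℝ (⊤ : ℕ∞) (fun x => g x a b) O

/-- A relativistic spacetime, presented in a global coordinate chart: a connected open
region of ℝ⁴ equipped with a smooth Lorentz-signature metric. -/
structure Spacetime where
  carrier : Set Pt
  isOpen : IsOpen carrier
  connected : IsConnected carrier
  metric : Pt → Mat
  smooth : SmoothMatOn metric carrier
  symm : ∀ x ∈ carrier, (metric x)ᵀ = metric x
  lorentz : ∀ x ∈ carrier, LorentzSig (metric x)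

/-- An embedded curve: smooth, regular (an immersion), and a topological embedding,
so that its image is a one-dimensional embedded submanifold. -/
structure IsEmbeddedCurve (I : Set ℝ) (γ : ℝ → Pt) : Prop where
  smooth : ContDiffOn ℝ (⊤ : ℕ∞) γ I
  embedding : Topology.IsEmbedding fun t : I => γ (t : ℝ)
  regular : ∀ t ∈ I, derivWithin γ I t ≠ 0

/-- A Riemannian metric on `U`: smooth and positive definite there. -/
def RiemannianOn (h : Pt → Mat) (U : Set Pt) : Prop :=
  SmoothMatOn h U ∧ ∀ x ∈ U, (h x).PosDef

/-- Rank-`n` covariant tensor fields, by components. -/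
abbrev Tensor (n : ℕ) : Type := Pt → (Fin n → Fin 4) → ℝ

/-- View a matrix-valued field as a rank-2 covariant tensor field. -/
def toT2 (g : Pt → Mat) : Tensor 2 := fun x idx => g x (idx 0) (idx 1)

/-- Pointwise difference of tensor fields. -/
def tsub {n : ℕ} (T T' : Tensor n) : Tensor n := fun x idx => T x idx - T' x idx

/-- Covariant derivative of a covariant tensor field with respect to a derivative
operator; the new (derivative) index is the first index. -/
def covD (Γ : Conn) {n : ℕ} (T : Tensor n) : Tensor (n + 1) := fun x idx =>
  pd (fun y => T y (fun i => idx i.succ)) (idx 0) x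
    - ∑ i : Fin n, ∑ c, Γ x c (idx 0) (idx i.succ) *
        T x (Function.update (fun j : Fin n => idx j.succ) i c)

/-- Iterated covariant derivative `∇ʲ T`. -/
def covIter (Γ : Conn) {n : ℕ} (T : Tensor n) : (j : ℕ) → Tensor (n + j)
  | 0 => T
  | j + 1 => covD Γ (covIter Γ T j)

/-- The pointwise norm `|f|_h` of a covariant tensor, computed with the inverse of `h`:
`|f|_h = |h^{a₁b₁} ⋯ h^{aₙbₙ} f_{a₁…aₙ} f_{b₁…bₙ}|^{1/2}`. -/
def tnorm (h : Pt → Mat) {n : ℕ} (T : Tensor n) (x : Pt) : ℝ :=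
  Real.sqrt |∑ a : Fin n → Fin 4, ∑ b : Fin n → Fin 4,
    (∏ i, (h x)⁻¹ (a i) (b i)) * T x a * T x b|

/-- The distance function
`d_U(f, f′; h, k) = max_{0 ≤ j ≤ k} sup_U |∇ʲ(f − f′)|_h`, where `∇` is the
Levi-Civita derivative operator of `h`. -/
def dU (U : Set Pt) (h : Pt → Mat) {n : ℕ} (T T' : Tensor n) (k : ℕ) : ℝ :=
  ⨆ j : Fin (k + 1), ⨆ x : U, tnorm h (covIter (christoffel h) (tsub T T') j.1) (x : Pt)

/-- A diffeomorphism between subsets `U'` and `U` of ℝ⁴. -/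
structure DiffeoOn (U' U : Set Pt) where
  toFun : Pt → Pt
  invFun : Pt → Pt
  mapsTo : Set.MapsTo toFun U' U
  mapsTo' : Set.MapsTo invFun U U'
  leftInv : ∀ x ∈ U', invFun (toFun x) = x
  rightInv : ∀ x ∈ U, toFun (invFun x) = x
  smooth : ContDiffOn ℝ (⊤ : ℕ∞) toFun U'
  smoothInv : ContDiffOn ℝ (⊤ : ℕ∞) invFun U

/-- Jacobian matrix of a map `φ : ℝ⁴ → ℝ⁴`: `Jac φ x a b = ∂φᵃ/∂xᵇ (x)`. -/
def Jac (φ : Pt → Pt) (x : Pt) (a b : Fin 4) : ℝ := pd (fun y => φ y a) b x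

/-- Pullback of a rank-2 covariant tensor (metric) along `φ`:
`(φ*g)_{ab}(x) = ∂_a φᶜ ∂_b φᵈ g_{cd}(φ(x))`. -/
def pull2 (φ : Pt → Pt) (g : Pt → Mat) : Pt → Mat := fun x =>
  Matrix.of fun a b => ∑ c, ∑ d, Jac φ x c a * Jac φ x d b * g (φ x) c d

/-- Pullback of a rank-`n` covariant tensor field along `φ`. -/
def pullT (φ : Pt → Pt) {n : ℕ} (T : Tensor n) : Tensor n := fun x idx =>
  ∑ σ : Fin n → Fin 4, (∏ i, Jac φ x (σ i) (idx i)) * T (φ x) σ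

/-- Pullback of a derivative operator along the diffeomorphism `φ` (with inverse `ψ`):
the usual inhomogeneous transformation law for Christoffel symbols. -/
def pullConn (φ ψ : Pt → Pt) (Γ : Conn) : Conn := fun x a b c =>
  ∑ e, Jac ψ (φ x) a e *
    ((∑ f, ∑ g', Γ (φ x) e f g' * Jac φ x f b * Jac φ x g' c)
      + pd (fun y => Jac φ y e c) b x)

/-- Lie derivative of a metric along a vector field, in components:
`(L_ξ g)_{ab} = ξᶜ ∂_c g_{ab} + g_{cb} ∂_a ξᶜ + g_{ac} ∂_b ξᶜ`. -/
def lieD (ξ : Pt → Pt) (g : Pt → Mat) (x : Pt) (a b : Fin 4) : ℝ :=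
  (∑ c, ξ x c * pd (fun y => g y a b) c x)
    + (∑ c, g x c b * pd (fun y => ξ y c) a x)
    + ∑ c, g x a c * pd (fun y => ξ y c) b x

/-- Lie bracket of vector fields: `[X,Y]ᵃ = Xᶜ ∂_c Yᵃ − Yᶜ ∂_c Xᵃ`. -/
def bracket (X Y : Pt → Pt) (x : Pt) : Pt := fun a =>
  (∑ c, X x c * pd (fun y => Y y a) c x) - ∑ c, Y x c * pd (fun y => X y a) c x


lemma pd_congr_on {f g : Pt → ℝ} {s : Set Pt} (hs : IsOpen s) {x : Pt} (hx : x ∈ s)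
    (h : ∀ y ∈ s, f y = g y) (b : Fin 4) : pd f b x = pd g b x := by
  have he : f =ᶠ[nhds x] g := Filter.eventuallyEq_of_mem (hs.mem_nhds hx) h
  unfold pd
  rw [he.fderiv_eq]

lemma lorentz_det_isUnit {A : Mat} (h : LorentzSig A) : IsUnit A.det := by
  obtain ⟨P, hP, hPA⟩ := h
  have hdet : Pᵀ.det * A.det * P.det = eta.det := by
    rw [← Matrix.det_mul, ← Matrix.det_mul, hPA]
  have heta : eta.det = -1 := by
    simp [eta, Matrix.det_diagonal, Fin.prod_univ_four]
  rw [Matrix.det_transpose, heta] at hdet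
  rw [isUnit_iff_ne_zero]
  intro h0
  rw [h0] at hdet
  norm_num at hdet

/-- If `ḡ` is a flat metric on a neighborhood `O` agreeing with `g`, together with its
Levi-Civita derivative operator, on `γ[I] ∩ O`, and `ξ` is a Killing vector field of `ḡ`
on `O`, then the Lie derivative of `g` along `ξ` vanishes at every point of `γ[I] ∩ O`;
i.e., `ξ` is an approximate local Killing vector field of `g` at those points. -/
theorem killing_field_transfer (S : Spacetime) (I : Set ℝ) (γ : ℝ → Pt)
    (hγ : IsEmbeddedCurve I γ) (him : γ '' I ⊆ S.carrier)
    (O : Set Pt) (hO : IsOpen O) (hOM : O ⊆ S.carrier)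
    (gbar : Pt → Mat) (hsm : SmoothMatOn gbar O)
    (hlor : ∀ x ∈ O, LorentzSig (gbar x))
    (hflat : FlatMetricOn gbar O)
    (hagree : ∀ x ∈ γ '' I ∩ O,
      gbar x = S.metric x ∧
      ∀ a b c, christoffel gbar x a b c = christoffel S.metric x a b c)
    (ξ : Pt → Pt) (hξ : ContDiffOn ℝ (⊤ : ℕ∞) ξ O)
    (hkilling : ∀ x ∈ O, ∀ a b, lieD ξ gbar x a b = 0) :
    ∀ x ∈ γ '' I ∩ O, ∀ a b, lieD ξ S.metric x a b = 0 := by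
  rintro x hx a b
  obtain ⟨hgx, hΓ⟩ := hagree x hx
  obtain ⟨hxγ, hxO⟩ := hx
  have hxM : x ∈ S.carrier := hOM hxO
  have hdet : IsUnit (S.metric x).det := by
    rw [← hgx]; exact lorentz_det_isUnit (hlor x hxO)
  have hvsymm : ∀ p q r : Fin 4, pd (fun y => S.metric y p q) r x
      = pd (fun y => S.metric y q p) r x := by
    intro p q r
    refine pd_congr_on S.isOpen hxM (fun y hy => ?_) r
    conv_lhs => rw [← S.symm y hy]
    exact Matrix.transpose_apply _ _ _
  have hgsym : ∀ p q : Fin 4, S.metric x p q = S.metric x q p := by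
    intro p q
    conv_lhs => rw [← S.symm x hxM]
    exact Matrix.transpose_apply _ _ _
  have hkey : ∀ p q r : Fin 4,
      pd (fun y => gbar y p r) q x + pd (fun y => gbar y p q) r x
        - pd (fun y => gbar y q r) p x
      = pd (fun y => S.metric y p r) q x + pd (fun y => S.metric y p q) r x
        - pd (fun y => S.metric y q r) p x := by
    intro p q r
    set Δ : Fin 4 → ℝ := fun d =>
      (pd (fun y => gbar y d r) q x + pd (fun y => gbar y d q) r x
        - pd (fun y => gbar y q r) d x)
      - (pd (fun y => S.metric y d r) q x + pd (fun y => S.metric y d q) r x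
        - pd (fun y => S.metric y q r) d x) with hDdef
    have h0 : (S.metric x)⁻¹.mulVec Δ = 0 := by
      funext e
      have h1 := hΓ e q r
      have h2 : ∑ d, (S.metric x)⁻¹ e d * Δ d
          = 2 * christoffel gbar x e q r - 2 * christoffel S.metric x e q r := by
        unfold christoffel
        rw [hgx]
        simp only [hDdef, mul_sub, Finset.sum_sub_distrib]
        ring
      have h3 : ∑ d, (S.metric x)⁻¹ e d * Δ d = 0 := by
        rw [h2, h1]; ring
      simpa [Matrix.mulVec, dotProduct] using h3
    have hD0 : Δ = 0 := by
      have h4 := congrArg (fun v => (S.metric x).mulVec v) h0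
      simpa [Matrix.mulVec_mulVec, Matrix.mul_nonsing_inv _ hdet] using h4
    have h5 := congrFun hD0 p
    simp only [hDdef, Pi.zero_apply, sub_eq_zero] at h5
    exact h5
  have ukey : ∀ p q r : Fin 4,
      pd (fun y => gbar y p q) r x + pd (fun y => gbar y q p) r x
        = 2 * pd (fun y => S.metric y p q) r x := by
    intro p q r
    linarith [hkey p q r, hkey q p r, hvsymm q p r]
  have h1 := hkilling x hxO a b
  have h2 := hkilling x hxO b a
  unfold lieD at h1 h2 ⊢
  rw [hgx] at h1 h2
  have hA : (∑ c, ξ x c * pd (fun y => gbar y a b) c x)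
      + ∑ c, ξ x c * pd (fun y => gbar y b a) c x
      = 2 * ∑ c, ξ x c * pd (fun y => S.metric y a b) c x := by
    rw [← Finset.sum_add_distrib, Finset.mul_sum]
    refine Finset.sum_congr rfl fun c _ => ?_
    linear_combination (ξ x c) * ukey a b c
  have hB : (∑ c, S.metric x c a * pd (fun y => ξ y c) b x)
      = ∑ c, S.metric x a c * pd (fun y => ξ y c) b x :=
    Finset.sum_congr rfl fun c _ => by rw [hgsym c a]
  have hC : (∑ c, S.metric x b c * pd (fun y => ξ y c) a x)
      = ∑ c, S.metric x c b * pd (fun y => ξ y c) a x :=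
    Finset.sum_congr rfl fun c _ => by rw [hgsym b c]
  linarith [h1, h2, hA, hB, hC]


end
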